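/- Relativization for expanding domains: let φ be a one-variable first-order modal formula with counting quantifiers, m = md(φ), and E a unary predicate not occurring in φ. Then φ is satisfiable with respect to QK^exp if and only if the formula E(x) ∧ ζ_exp ∧ φ^E is satisfiable with respect to QK (over constant domain models). -/

import Mathlib

/-! Syntax of one-variable first-order modal formulas with counting quantifiers:
    φ ::= P(x) | ¬φ | (φ∧φ) | ◇φ | ∃[≤c]x φ. -/

inductive Fml : Type
  | atom : ℕ → Fml
  | neg : Fml → Fml
  | conj : Fml → Fml → Fml
  | dia : Fml → Fml
  | countLe : ℕ → Fml → Fml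
deriving DecidableEq

namespace Fml

/-- Subformulas. -/
def sub : Fml → Finset Fml
  | atom n => {atom n}
  | neg ψ => insert (neg ψ) ψ.sub
  | conj ψ χ => insert (conj ψ χ) (ψ.sub ∪ χ.sub)
  | dia ψ => insert (dia ψ) ψ.sub
  | countLe c ψ => insert (countLe c ψ) ψ.sub

/-- Modal depth. -/
def md : Fml → ℕ
  | atom _ => 0
  | neg ψ => ψ.md
  | conj ψ χ => max ψ.md χ.md
  | dia ψ => ψ.md + 1
  | countLe _ ψ => ψ.md

/-- Capacity: the largest counting-quantifier subscript (0 if none). -/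
def cpt : Fml → ℕ
  | atom _ => 0
  | neg ψ => ψ.cpt
  | conj ψ χ => max ψ.cpt χ.cpt
  | dia ψ => ψ.cpt
  | countLe c ψ => max c ψ.cpt

/-- Length of the formula as a string, counting subscripts written in binary. -/
def len : Fml → ℕ
  | atom _ => 1
  | neg ψ => ψ.len + 1
  | conj ψ χ => ψ.len + χ.len + 1
  | dia ψ => ψ.len + 1
  | countLe c ψ => ψ.len + Nat.size c + 1

/-- Predicate symbols occurring in a formula. -/
def preds : Fml → Finset ℕ
  | atom n => {n}
  | neg ψ => ψ.preds
  | conj ψ χ => ψ.preds ∪ χ.preds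
  | dia ψ => ψ.preds
  | countLe _ ψ => ψ.preds

def imp (ψ χ : Fml) : Fml := neg (conj ψ (neg χ))
def or (ψ χ : Fml) : Fml := neg (conj (neg ψ) (neg χ))
def iff (ψ χ : Fml) : Fml := conj (ψ.imp χ) (χ.imp ψ)
def box (ψ : Fml) : Fml := neg (dia (neg ψ))
/-- `∃x ψ := ¬∃[≤0]x ψ`. -/
def ex (ψ : Fml) : Fml := neg (countLe 0 ψ)
/-- `∀x ψ := ∃[≤0]x ¬ψ`. -/
def fal (ψ : Fml) : Fml := countLe 0 (neg ψ)
/-- A tautology. -/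
def top : Fml := neg (conj (atom 0) (neg (atom 0)))

/-- `boxIter n ψ` is `□^n ψ`. -/
def boxIter : ℕ → Fml → Fml
  | 0, ψ => ψ
  | n+1, ψ => (boxIter n ψ).box

/-- `boxLe m ψ` is `⋀_{k=0}^{m} □^k ψ`. -/
def boxLe : ℕ → Fml → Fml
  | 0, ψ => ψ
  | n+1, ψ => conj (boxLe n ψ) (boxIter (n+1) ψ)

end Fml

/-- A first-order Kripke model `M = (W,R,D,d,I)` (unary predicates suffice for the
one-variable fragment). -/
structure KModel where
  W : Type
  R : W → W → Prop
  D : Type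
  Dne : Nonempty D
  dom : W → Set D
  domNe : ∀ w, (dom w).Nonempty
  I : W → ℕ → Set D
  Isub : ∀ w p, I w p ⊆ dom w

/-- Satisfaction `M,w ⊨^a φ`. -/
def KModel.sat (M : KModel) : Fml → M.W → M.D → Prop
  | .atom p, w, a => a ∈ M.I w p
  | .neg ψ, w, a => ¬ M.sat ψ w a
  | .conj ψ χ, w, a => M.sat ψ w a ∧ M.sat χ w a
  | .dia ψ, w, a => ∃ v, M.R w v ∧ M.sat ψ v a
  | .countLe c ψ, w, _ => {b | b ∈ M.dom w ∧ M.sat ψ w b}.encard ≤ (c : ℕ∞)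

def KModel.constDom (M : KModel) : Prop := ∀ u v, M.dom u = M.dom v
def KModel.expDom (M : KModel) : Prop := ∀ u v, M.R u v → M.dom u ⊆ M.dom v
def KModel.decDom (M : KModel) : Prop := ∀ u v, M.R u v → M.dom v ⊆ M.dom u

/-- Satisfiability with respect to QK (constant domains). -/
def satQK (φ : Fml) : Prop :=
  ∃ M : KModel, M.constDom ∧ ∃ w a, a ∈ M.dom w ∧ M.sat φ w a

/-- Satisfiability with respect to QK^exp (expanding domains). -/
def satQKexp (φ : Fml) : Prop :=
  ∃ M : KModel, M.expDom ∧ ∃ w a, a ∈ M.dom w ∧ M.sat φ w a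

/-- Satisfiability with respect to QK^dec (decreasing domains). -/
def satQKdec (φ : Fml) : Prop :=
  ∃ M : KModel, M.decDom ∧ ∃ w a, a ∈ M.dom w ∧ M.sat φ w a

/-- `R` is the immediate-successor (parent–child) relation of a rooted irreflexive
intransitive tree of depth ≤ m with root `r`. -/
def IsTreeOfDepth {W : Type} (R : W → W → Prop) (r : W) (m : ℕ) : Prop :=
  ∃ depth : W → ℕ,
    depth r = 0 ∧ (∀ w, depth w ≤ m) ∧
    (∀ u v, R u v → depth v = depth u + 1) ∧
    (∀ v, v ≠ r → ∃! u, R u v) ∧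
    (∀ v, Relation.ReflTransGen R r v)

/-- Relativization φ^E of a formula to a fresh predicate E. -/
def relE (E : ℕ) : Fml → Fml
  | .atom p => .atom p
  | .neg ψ => .neg (relE E ψ)
  | .conj ψ χ => .conj (relE E ψ) (relE E χ)
  | .dia ψ => .dia (relE E ψ)
  | .countLe c ψ => .countLe c (.conj (.atom E) (relE E ψ))

/-- `ζ_exp := □^{≤m} ∀x (E(x) → □E(x))`. -/
def zetaExp (E m : ℕ) : Fml :=
  Fml.boxLe m (Fml.fal ((Fml.atom E).imp (Fml.box (Fml.atom E))))

/-- `ζ_dec := ∀x □^{≤m} (◇E(x) → E(x))`. -/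
def zetaDec (E m : ℕ) : Fml :=
  Fml.fal (Fml.boxLe m ((Fml.dia (Fml.atom E)).imp (Fml.atom E)))

/-! From an expanding-domain model one obtains a constant-domain model on the same frame by giving
every world the whole of `D` as its domain and letting `E` hold exactly of the elements of the old
domain: then `ζ_exp` holds everywhere and `φ^E` says what `φ` said. Conversely, `ζ_exp` makes `E`
persistent along every edge leaving a world at distance at most `md φ` from the root. Keeping only
those worlds and using `E` as the domain gives an expanding-domain model, and since `φ` cannot look
further than `md φ` steps, it holds there exactly where `φ^E` held in the original model. -/

def ReachIn {W : Type} (R : W → W → Prop) : ℕ → W → W → Prop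
  | 0, w, v => w = v
  | n + 1, w, v => ∃ u, R w u ∧ ReachIn R n u v

theorem reachIn_succ_iff_snoc {W : Type} {R : W → W → Prop} {n : ℕ} {w v : W} :
    ReachIn R (n + 1) w v ↔ ∃ u, ReachIn R n w u ∧ R u v := by
  induction n generalizing w with
  | zero => simp [ReachIn]
  | succ n ih =>
    simp only [ReachIn] at ih ⊢
    constructor
    · rintro ⟨u, hwu, huv⟩
      obtain ⟨z, hz, hzv⟩ := ih.mp huv
      exact ⟨z, ⟨u, hwu, hz⟩, hzv⟩
    · rintro ⟨z, ⟨u, hwu, hz⟩, hzv⟩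
      exact ⟨u, hwu, ih.mpr ⟨z, hz, hzv⟩⟩

namespace KModel

variable (M : KModel)

theorem sat_box {ψ : Fml} {w : M.W} {a : M.D} :
    M.sat ψ.box w a ↔ ∀ v, M.R w v → M.sat ψ v a := by
  simp only [Fml.box, sat, not_exists, not_and, not_not]

theorem sat_imp {ψ χ : Fml} {w : M.W} {a : M.D} :
    M.sat (ψ.imp χ) w a ↔ (M.sat ψ w a → M.sat χ w a) := by
  simp only [Fml.imp, sat, not_and, not_not]

theorem sat_fal {ψ : Fml} {w : M.W} {a : M.D} :
    M.sat ψ.fal w a ↔ ∀ b ∈ M.dom w, M.sat ψ w b := by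
  simp [Fml.fal, sat, Set.encard_eq_zero, Set.eq_empty_iff_forall_notMem]

theorem sat_boxIter {ψ : Fml} {n : ℕ} {w : M.W} {a : M.D} :
    M.sat (Fml.boxIter n ψ) w a ↔ ∀ v, ReachIn M.R n w v → M.sat ψ v a := by
  induction n generalizing w with
  | zero => simp [Fml.boxIter, ReachIn]
  | succ n ih =>
    simp only [Fml.boxIter, sat_box, ih, ReachIn]
    grind

theorem sat_boxLe {ψ : Fml} {n : ℕ} {w : M.W} {a : M.D} :
    M.sat (Fml.boxLe n ψ) w a ↔ ∀ k ≤ n, ∀ v, ReachIn M.R k w v → M.sat ψ v a := by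
  induction n with
  | zero => simp [Fml.boxLe, ReachIn]
  | succ n ih =>
    simp only [Fml.boxLe, sat, ih, sat_boxIter, Nat.le_succ_iff_eq_or_le]
    grind

def PersistentWithin (E : ℕ) (w : M.W) (m : ℕ) : Prop :=
  ∀ k ≤ m, ∀ v, ReachIn M.R k w v → ∀ b ∈ M.I v E, ∀ u, M.R v u → b ∈ M.I u E

theorem sat_zetaExp {E m : ℕ} {w : M.W} {a : M.D} :
    M.sat (zetaExp E m) w a ↔ M.PersistentWithin E w m := by
  simp only [zetaExp, sat_boxLe, sat_fal, sat_imp, sat_box, PersistentWithin, sat]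
  exact forall₄_congr fun _ _ v _ =>
    ⟨fun h b hb => h b (M.Isub v E hb) hb, fun h b _ hb => h b hb⟩

def toConstDom (E : ℕ) : KModel where
  W := M.W
  R := M.R
  D := M.D
  Dne := M.Dne
  dom := fun _ => Set.univ
  domNe := fun _ => have := M.Dne; Set.univ_nonempty
  I := fun v p => if p = E then M.dom v else M.I v p
  Isub := fun _ _ => Set.subset_univ _

theorem constDom_toConstDom (E : ℕ) : (M.toConstDom E).constDom := fun _ _ => rfl

theorem mem_toConstDom_I_self {E : ℕ} {v : M.W} {b : M.D} :
    b ∈ (M.toConstDom E).I v E ↔ b ∈ M.dom v :=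
  iff_of_eq (congrArg (b ∈ ·) (if_pos rfl))

theorem sat_relE_toConstDom {E : ℕ} {ψ : Fml} (hψ : E ∉ ψ.preds) (v : M.W) (x : M.D) :
    (M.toConstDom E).sat (relE E ψ) v x ↔ M.sat ψ v x := by
  induction ψ generalizing v x with
  | atom p =>
    simp only [Fml.preds, Finset.mem_singleton] at hψ
    exact iff_of_eq (congrArg (x ∈ ·) (if_neg (Ne.symm hψ)))
  | neg ψ ih => exact not_congr (ih hψ v x)
  | conj ψ χ ih₁ ih₂ =>
    simp only [Fml.preds, Finset.mem_union, not_or] at hψ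
    exact and_congr (ih₁ hψ.1 v x) (ih₂ hψ.2 v x)
  | dia ψ ih => exact exists_congr fun u => and_congr_right' (ih hψ u x)
  | countLe c ψ ih =>
    have hset : {b | b ∈ (M.toConstDom E).dom v ∧
          (M.toConstDom E).sat (.conj (.atom E) (relE E ψ)) v b}
        = {b | b ∈ M.dom v ∧ M.sat ψ v b} := by
      ext b
      exact ⟨fun ⟨_, hb, h⟩ => ⟨M.mem_toConstDom_I_self.1 hb, (ih hψ v b).1 h⟩,
        fun ⟨hb, h⟩ => ⟨trivial, M.mem_toConstDom_I_self.2 hb, (ih hψ v b).2 h⟩⟩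
    exact iff_of_eq (congrArg (Set.encard · ≤ c) hset)

theorem sat_zetaExp_toConstDom (hM : M.expDom) (E m : ℕ) (w : M.W) (a : M.D) :
    (M.toConstDom E).sat (zetaExp E m) w a := by
  refine (sat_zetaExp (M := M.toConstDom E) (w := w)).2 fun _ _ v _ b hb u hvu => ?_
  exact M.mem_toConstDom_I_self.2 (hM v u hvu (M.mem_toConstDom_I_self.1 hb))

def relSubmodel (E : ℕ) (w : M.W) (m : ℕ) : KModel where
  W := {v // (∃ k ≤ m, ReachIn M.R k w v) ∧ (M.I v E).Nonempty}
  R := fun u v => M.R u v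
  D := M.D
  Dne := M.Dne
  dom := fun v => M.I v E
  domNe := fun v => v.2.2
  I := fun v p => M.I v p ∩ M.I v E
  Isub := fun _ _ => Set.inter_subset_right

variable {M} {E m : ℕ} {w : M.W}

theorem expDom_relSubmodel (hP : M.PersistentWithin E w m) : (M.relSubmodel E w m).expDom := by
  intro u v huv b hb
  obtain ⟨⟨k, hk, hu⟩, -⟩ := u.2
  exact hP k hk u.1 hu b hb v.1 huv

theorem sat_relSubmodel (hP : M.PersistentWithin E w m) {ψ : Fml} (hψ : E ∉ ψ.preds) {k : ℕ}
    (hk : k + ψ.md ≤ m) (v : (M.relSubmodel E w m).W) (hv : ReachIn M.R k w v.1) {x : M.D}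
    (hx : x ∈ M.I v.1 E) :
    (M.relSubmodel E w m).sat ψ v x ↔ M.sat (relE E ψ) v.1 x := by
  induction ψ generalizing k v x with
  | atom p => exact and_iff_left hx
  | neg ψ ih => exact not_congr (ih hψ hk v hv hx)
  | conj ψ χ ih₁ ih₂ =>
    simp only [Fml.preds, Finset.mem_union, not_or] at hψ
    simp only [Fml.md] at hk
    exact and_congr (ih₁ hψ.1 (by omega) v hv hx) (ih₂ hψ.2 (by omega) v hv hx)
  | dia ψ ih =>
    simp only [Fml.md] at hk
    have hk' : k ≤ m := by omega
    constructor
    · rintro ⟨u, hvu, hu⟩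
      have hxu : x ∈ M.I u.1 E := hP k hk' v.1 hv x hx u.1 hvu
      have hwu : ReachIn M.R (k + 1) w u.1 := reachIn_succ_iff_snoc.2 ⟨_, hv, hvu⟩
      exact ⟨u.1, hvu, (ih hψ (by omega) u hwu hxu).1 hu⟩
    · rintro ⟨u, hvu, hu⟩
      have hxu : x ∈ M.I u E := hP k hk' v.1 hv x hx u hvu
      have hwu : ReachIn M.R (k + 1) w u := reachIn_succ_iff_snoc.2 ⟨_, hv, hvu⟩
      let u' : (M.relSubmodel E w m).W := ⟨u, ⟨k + 1, by omega, hwu⟩, x, hxu⟩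
      exact ⟨u', hvu, (ih hψ (by omega) u' hwu hxu).2 hu⟩
  | countLe c ψ ih =>
    simp only [Fml.md] at hk
    have hset : {b | b ∈ M.I v.1 E ∧ (M.relSubmodel E w m).sat ψ v b}
        = {b | b ∈ M.dom v.1 ∧ b ∈ M.I v.1 E ∧ M.sat (relE E ψ) v.1 b} := by
      ext b
      exact ⟨fun ⟨hb, h⟩ => ⟨M.Isub _ _ hb, hb, (ih hψ hk v hv hb).1 h⟩,
        fun ⟨_, hb, h⟩ => ⟨hb, (ih hψ hk v hv hb).2 h⟩⟩
    exact iff_of_eq (congrArg (Set.encard · ≤ c) hset)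

end KModel

/-- φ is satisfiable with respect to QK^exp iff `E(x) ∧ ζ_exp ∧ φ^E` is
satisfiable with respect to QK, for any predicate E not occurring in φ. -/
theorem stmt_5 (φ : Fml) (E : ℕ) (hE : E ∉ φ.preds) :
    satQKexp φ ↔
      satQK (Fml.conj (Fml.atom E) (Fml.conj (zetaExp E φ.md) (relE E φ))) := by
  constructor
  · rintro ⟨M, hM, w, a, ha, hφ⟩
    exact ⟨M.toConstDom E, M.constDom_toConstDom E, w, a, trivial, M.mem_toConstDom_I_self.2 ha,
      M.sat_zetaExp_toConstDom hM E φ.md w a, (M.sat_relE_toConstDom hE w a).2 hφ⟩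
  · rintro ⟨M, -, w, a, -, haE, hζ, hφ⟩
    have hP := M.sat_zetaExp.1 hζ
    let w' : (M.relSubmodel E w φ.md).W := ⟨w, ⟨0, Nat.zero_le _, rfl⟩, a, haE⟩
    exact ⟨_, KModel.expDom_relSubmodel hP, w', a, haE,
      (KModel.sat_relSubmodel hP hE (Nat.zero_add _).le w' rfl haE).2 hφ⟩
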